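/- Let φ_1,φ_2,ψ_1,ψ_2 ∈ L²(ℝ) be such that the family {φ_i(·−k): i∈{1,2}, k∈ℤ} ∪ {2^{j/2}ψ_i(2^j·−k): i∈{1,2}, j∈ℕ, k∈ℤ} is orthonormal in L²(ℝ). Define, for k=(k₁,k₂)∈ℤ² and j∈ℕ, the vector-valued functions in L²(ℝ²,ℝ²): Φ¹_k=(φ₁(x−k₁)φ₁(y−k₂), φ₂(x−k₁)φ₂(y−k₂))^T, Φ²_k=(φ₁(x−k₁)φ₂(y−k₂), φ₂(x−k₁)φ₁(y−k₂))^T, Ψ¹_{j,k}=(φ₁(2^jx−k₁)ψ₁(2^jy−k₂), φ₂(2^jx−k₁)ψ₂(2^jy−k₂))^T, Ψ²_{j,k}=(φ₁(2^jx−k₁)ψ₂(2^jy−k₂), φ₂(2^jx−k₁)ψ₁(2^jy−k₂))^T, Ψ³_{j,k}=(ψ₁(2^jx−k₁)φ₁(2^jy−k₂), ψ₂(2^jx−k₁)φ₂(2^jy−k₂))^T, Ψ⁴_{j,k}=(ψ₁(2^jx−k₁)φ₂(2^jy−k₂), ψ₂(2^jx−k₁)φ₁(2^jy−k₂))^T,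 Ψ⁵_{j,k}=(ψ₁(2^jx−k₁)ψ₁(2^jy−k₂), ψ₂(2^jx−k₁)ψ₂(2^jy−k₂))^T, Ψ⁶_{j,k}=(ψ₁(2^jx−k₁)ψ₂(2^jy−k₂), ψ₂(2^jx−k₁)ψ₁(2^jy−k₂))^T. Then this system is *-orthogonal: ⟨Φ^i_k, Φ^{i'}_{k'}⟩_* = δ_{i,i'} δ_{k,k'} I₂; ⟨Φ^i_k, Ψ^{i'}_{j,k'}⟩_* = 0₂ₓ₂ for all i∈{1,2}, i'∈{1,…,6}, j∈ℕ, k,k'∈ℤ²; and ⟨Ψ^i_{j,k}, Ψ^{i'}_{j',k'}⟩_* = δ_{i,i'} δ_{j,j'} δ_{k,k'} 2^{−2j} I₂ for all i,i'∈{1,…,6}, j,j'∈ℕ, k,k'∈ℤ². -/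

import Mathlib

open MeasureTheory

/-- The two scaling families `Φ¹_k, Φ²_k` in `L²(ℝ², ℝ²)`:
`Φ¹_k = (φ₁(x−k₁)φ₁(y−k₂), φ₂(x−k₁)φ₂(y−k₂))ᵀ`,
`Φ²_k = (φ₁(x−k₁)φ₂(y−k₂), φ₂(x−k₁)φ₁(y−k₂))ᵀ`. Here `φ 0 = φ₁`, `φ 1 = φ₂`. -/
noncomputable def PhiV2 (φ : Fin 2 → ℝ → ℝ) (i : Fin 2) (k : ℤ × ℤ)
    (p : ℝ × ℝ) : Fin 2 → ℝ :=
  let X := p.1 - (k.1 : ℝ)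
  let Y := p.2 - (k.2 : ℝ)
  ![![φ 0 X * φ 0 Y, φ 1 X * φ 1 Y],
    ![φ 0 X * φ 1 Y, φ 1 X * φ 0 Y]] i

/-- The six wavelet families `Ψ¹_{j,k}, …, Ψ⁶_{j,k}` in `L²(ℝ², ℝ²)`, e.g.
`Ψ¹_{j,k} = (φ₁(2^jx−k₁)ψ₁(2^jy−k₂), φ₂(2^jx−k₁)ψ₂(2^jy−k₂))ᵀ`, …,
`Ψ⁶_{j,k} = (ψ₁(2^jx−k₁)ψ₂(2^jy−k₂), ψ₂(2^jx−k₁)ψ₁(2^jy−k₂))ᵀ`. -/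
noncomputable def PsiV2 (φ ψ : Fin 2 → ℝ → ℝ) (i : Fin 6) (j : ℕ) (k : ℤ × ℤ)
    (p : ℝ × ℝ) : Fin 2 → ℝ :=
  let X := (2 : ℝ) ^ j * p.1 - (k.1 : ℝ)
  let Y := (2 : ℝ) ^ j * p.2 - (k.2 : ℝ)
  ![![φ 0 X * ψ 0 Y, φ 1 X * ψ 1 Y],
    ![φ 0 X * ψ 1 Y, φ 1 X * ψ 0 Y],
    ![ψ 0 X * φ 0 Y, ψ 1 X * φ 1 Y],
    ![ψ 0 X * φ 1 Y, ψ 1 X * φ 0 Y],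
    ![ψ 0 X * ψ 0 Y, ψ 1 X * ψ 1 Y],
    ![ψ 0 X * ψ 1 Y, ψ 1 X * ψ 0 Y]] i


@[simp] lemma finmk2' (h : 2 < 6) : (⟨2, h⟩ : Fin 6) = 2 := rfl
@[simp] lemma finmk3' (h : 3 < 6) : (⟨3, h⟩ : Fin 6) = 3 := rfl
@[simp] lemma finmk4' (h : 4 < 6) : (⟨4, h⟩ : Fin 6) = 4 := rfl
@[simp] lemma finmk5' (h : 5 < 6) : (⟨5, h⟩ : Fin 6) = 5 := rfl

@[simp]
lemma cons_val_five' {α : Type*} {m : ℕ} (x : α) (u : Fin (m + 5) → α) :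
    Matrix.vecCons x u 5 =
      Matrix.vecHead (Matrix.vecTail (Matrix.vecTail (Matrix.vecTail (Matrix.vecTail u)))) :=
  rfl

lemma split4 (f g f' g' : ℝ → ℝ) :
    ∫ p : ℝ × ℝ, f p.1 * g p.2 * (f' p.1 * g' p.2) = (∫ x, f x * f' x) * ∫ y, g y * g' y := by
  rw [Measure.volume_eq_prod, ← integral_prod_mul]
  congr 1; ext p; ring

lemma splitS (F G F' G' : ℝ → ℝ) (a b a' b' : ℝ) :
    ∫ p : ℝ × ℝ, F (p.1 - a) * G (p.2 - b) * (F' (p.1 - a') * G' (p.2 - b')) =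
      (∫ x, F (x - a) * F' (x - a')) * ∫ y, G (y - b) * G' (y - b') :=
  split4 (fun x => F (x - a)) (fun y => G (y - b)) (fun x => F' (x - a')) (fun y => G' (y - b'))

lemma splitST (F G F' G' : ℝ → ℝ) (a b c' a' b' : ℝ) :
    ∫ p : ℝ × ℝ, F (p.1 - a) * G (p.2 - b) * (F' (c' * p.1 - a') * G' (c' * p.2 - b')) =
      (∫ x, F (x - a) * F' (c' * x - a')) * ∫ y, G (y - b) * G' (c' * y - b') :=
  split4 (fun x => F (x - a)) (fun y => G (y - b)) (fun x => F' (c' * x - a'))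
    (fun y => G' (c' * y - b'))

lemma splitT (F G F' G' : ℝ → ℝ) (c a b c' a' b' : ℝ) :
    ∫ p : ℝ × ℝ, F (c * p.1 - a) * G (c * p.2 - b) * (F' (c' * p.1 - a') * G' (c' * p.2 - b')) =
      (∫ x, F (c * x - a) * F' (c' * x - a')) * ∫ y, G (c * y - b) * G' (c' * y - b') :=
  split4 (fun x => F (c * x - a)) (fun y => G (c * y - b)) (fun x => F' (c' * x - a'))
    (fun y => G' (c' * y - b'))

section
variable (φ ψ : Fin 2 → ℝ → ℝ)

lemma Iφψ0 (hφψ : ∀ i i' : Fin 2, ∀ k : ℤ, ∀ j : ℕ, ∀ k' : ℤ,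
      ∫ x : ℝ, φ i (x - k) *
        ((2 : ℝ) ^ ((j : ℝ) / 2) * ψ i' ((2 : ℝ) ^ j * x - k')) = 0)
    (i i' : Fin 2) (k : ℤ) (j : ℕ) (k' : ℤ) :
    ∫ x : ℝ, φ i (x - k) * ψ i' ((2 : ℝ) ^ j * x - k') = 0 := by
  have h := hφψ i i' k j k'
  have hC : (0:ℝ) < (2 : ℝ) ^ ((j : ℝ) / 2) := by positivity
  rw [show (fun x : ℝ => φ i (x - k) * ((2 : ℝ) ^ ((j : ℝ) / 2) * ψ i' ((2 : ℝ) ^ j * x - k')))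
      = fun x : ℝ => (2 : ℝ) ^ ((j : ℝ) / 2) * (φ i (x - k) * ψ i' ((2 : ℝ) ^ j * x - k'))
      from funext fun x => by ring] at h
  rw [integral_const_mul] at h
  exact (mul_eq_zero.1 h).resolve_left hC.ne'

lemma Iφψ (hφψ : ∀ i i' : Fin 2, ∀ k : ℤ, ∀ j : ℕ, ∀ k' : ℤ,
      ∫ x : ℝ, φ i (x - k) *
        ((2 : ℝ) ^ ((j : ℝ) / 2) * ψ i' ((2 : ℝ) ^ j * x - k')) = 0)
    {j j' : ℕ} (h : j ≤ j') (i i' : Fin 2) (k k' : ℤ) :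
    ∫ x : ℝ, φ i ((2:ℝ) ^ j * x - k) * ψ i' ((2 : ℝ) ^ j' * x - k') = 0 := by
  have key : (fun x : ℝ => φ i ((2:ℝ) ^ j * x - k) * ψ i' ((2 : ℝ) ^ j' * x - k'))
      = fun x : ℝ => (fun u : ℝ => φ i (u - k) * ψ i' ((2:ℝ) ^ (j' - j) * u - k')) ((2:ℝ)^j * x) := by
    funext x
    simp only []
    rw [← mul_assoc, pow_sub_mul_pow (2:ℝ) h]
  rw [key, Measure.integral_comp_mul_left
    (fun u : ℝ => φ i (u - k) * ψ i' ((2:ℝ) ^ (j' - j) * u - k')) ((2:ℝ)^j),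
    Iφψ0 φ ψ hφψ i i' k (j' - j) k', smul_zero]

lemma Iψφ (hφψ : ∀ i i' : Fin 2, ∀ k : ℤ, ∀ j : ℕ, ∀ k' : ℤ,
      ∫ x : ℝ, φ i (x - k) *
        ((2 : ℝ) ^ ((j : ℝ) / 2) * ψ i' ((2 : ℝ) ^ j * x - k')) = 0)
    {j j' : ℕ} (h : j' ≤ j) (i i' : Fin 2) (k k' : ℤ) :
    ∫ x : ℝ, ψ i ((2:ℝ) ^ j * x - k) * φ i' ((2 : ℝ) ^ j' * x - k') = 0 := by
  rw [show (fun x : ℝ => ψ i ((2:ℝ) ^ j * x - k) * φ i' ((2 : ℝ) ^ j' * x - k'))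
      = fun x : ℝ => φ i' ((2:ℝ) ^ j' * x - k') * ψ i ((2 : ℝ) ^ j * x - k)
      from funext fun x => mul_comm _ _]
  exact Iφψ φ ψ hφψ h i' i k' k

lemma Iφφj (hφφ : ∀ i i' : Fin 2, ∀ k k' : ℤ,
      ∫ x : ℝ, φ i (x - k) * φ i' (x - k') = if i = i' ∧ k = k' then 1 else 0)
    (j : ℕ) (i i' : Fin 2) (k k' : ℤ) :
    ∫ x : ℝ, φ i ((2:ℝ) ^ j * x - k) * φ i' ((2 : ℝ) ^ j * x - k') =
      if i = i' ∧ k = k' then ((2:ℝ) ^ j)⁻¹ else 0 := by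
  rw [show (fun x : ℝ => φ i ((2:ℝ) ^ j * x - k) * φ i' ((2 : ℝ) ^ j * x - k'))
      = fun x : ℝ => (fun u : ℝ => φ i (u - k) * φ i' (u - k')) ((2:ℝ)^j * x) from rfl,
    Measure.integral_comp_mul_left (fun u : ℝ => φ i (u - k) * φ i' (u - k')) ((2:ℝ)^j),
    hφφ i i' k k']
  have h2 : |((2:ℝ)^j)⁻¹| = ((2:ℝ)^j)⁻¹ := abs_of_pos (by positivity)
  rw [h2, smul_eq_mul]
  split_ifs <;> ring

lemma Iψψ (hψψ : ∀ i i' : Fin 2, ∀ j j' : ℕ, ∀ k k' : ℤ,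
      ∫ x : ℝ, ((2 : ℝ) ^ ((j : ℝ) / 2) * ψ i ((2 : ℝ) ^ j * x - k)) *
          ((2 : ℝ) ^ ((j' : ℝ) / 2) * ψ i' ((2 : ℝ) ^ j' * x - k')) =
        if i = i' ∧ j = j' ∧ k = k' then 1 else 0)
    (i i' : Fin 2) (j j' : ℕ) (k k' : ℤ) :
    ∫ x : ℝ, ψ i ((2:ℝ) ^ j * x - k) * ψ i' ((2 : ℝ) ^ j' * x - k') =
      if i = i' ∧ j = j' ∧ k = k' then ((2:ℝ) ^ j)⁻¹ else 0 := by
  have h := hψψ i i' j j' k k'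
  set C := (2 : ℝ) ^ ((j : ℝ) / 2) with hCdef
  set C' := (2 : ℝ) ^ ((j' : ℝ) / 2) with hC'def
  have hC : (0:ℝ) < C := by positivity
  have hC' : (0:ℝ) < C' := by positivity
  rw [show (fun x : ℝ => (C * ψ i ((2:ℝ) ^ j * x - k)) * (C' * ψ i' ((2 : ℝ) ^ j' * x - k')))
      = fun x : ℝ => (C * C') * (ψ i ((2:ℝ) ^ j * x - k) * ψ i' ((2 : ℝ) ^ j' * x - k'))
      from funext fun x => by ring, integral_const_mul] at h
  have hne : C * C' ≠ 0 := by positivity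
  rw [show (∫ x : ℝ, ψ i ((2:ℝ) ^ j * x - k) * ψ i' ((2 : ℝ) ^ j' * x - k'))
      = (C * C')⁻¹ * ((C * C') * ∫ x : ℝ, ψ i ((2:ℝ) ^ j * x - k) * ψ i' ((2 : ℝ) ^ j' * x - k'))
      from by rw [← mul_assoc, inv_mul_cancel₀ hne, one_mul], h]
  split_ifs with hc
  · obtain ⟨-, rfl, -⟩ := hc
    rw [mul_one, hCdef, ← Real.rpow_natCast 2 j, ← Real.rpow_add (by norm_num)]
    norm_num
  · rw [mul_zero]

end

set_option maxHeartbeats 1000000 in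
lemma part1V2 (φ : Fin 2 → ℝ → ℝ)
    (hφφ : ∀ i i' : Fin 2, ∀ k k' : ℤ,
      ∫ x : ℝ, φ i (x - k) * φ i' (x - k') = if i = i' ∧ k = k' then 1 else 0) :
    ∀ i i' : Fin 2, ∀ k k' : ℤ × ℤ, ∀ c c' : Fin 2,
      ∫ p : ℝ × ℝ, PhiV2 φ i k p c * PhiV2 φ i' k' p c' =
        if i = i' ∧ k = k' ∧ c = c' then 1 else 0 := by
  intro i i' k k' c c'
  fin_cases i <;> fin_cases i' <;> fin_cases c <;> fin_cases c' <;>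
    (simp only [PhiV2, Matrix.cons_val_zero, Matrix.cons_val_one, Matrix.head_cons,
       Fin.zero_eta, Fin.mk_one, Fin.isValue]
     rw [splitS]
     simp [hφφ, Prod.ext_iff, and_assoc, and_comm, and_left_comm]
     try (split_ifs <;> simp_all)
     try tauto)

set_option maxHeartbeats 1000000 in
lemma part2V2 (φ ψ : Fin 2 → ℝ → ℝ)
    (hφψ : ∀ i i' : Fin 2, ∀ k : ℤ, ∀ j : ℕ, ∀ k' : ℤ,
      ∫ x : ℝ, φ i (x - k) *
        ((2 : ℝ) ^ ((j : ℝ) / 2) * ψ i' ((2 : ℝ) ^ j * x - k')) = 0) :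
    ∀ i : Fin 2, ∀ i' : Fin 6, ∀ j : ℕ, ∀ k k' : ℤ × ℤ, ∀ c c' : Fin 2,
      ∫ p : ℝ × ℝ, PhiV2 φ i k p c * PsiV2 φ ψ i' j k' p c' = 0 := by
  intro i i' j k k' c c'
  fin_cases i <;> fin_cases i' <;> fin_cases c <;> fin_cases c' <;>
    (simp only [PhiV2, PsiV2, Matrix.cons_val_zero, Matrix.cons_val_one, Matrix.head_cons,
       Matrix.cons_val_two, Matrix.cons_val_three, Matrix.cons_val_four, cons_val_five',
       Matrix.tail_cons, Fin.isValue, Fin.zero_eta, Fin.mk_one, finmk2', finmk3', finmk4',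
       finmk5']
     rw [splitST]
     simp [Iφψ0 φ ψ hφψ])

set_option maxHeartbeats 4000000 in
lemma part3V2 (φ ψ : Fin 2 → ℝ → ℝ)
    (hφφ : ∀ i i' : Fin 2, ∀ k k' : ℤ,
      ∫ x : ℝ, φ i (x - k) * φ i' (x - k') = if i = i' ∧ k = k' then 1 else 0)
    (hφψ : ∀ i i' : Fin 2, ∀ k : ℤ, ∀ j : ℕ, ∀ k' : ℤ,
      ∫ x : ℝ, φ i (x - k) *
        ((2 : ℝ) ^ ((j : ℝ) / 2) * ψ i' ((2 : ℝ) ^ j * x - k')) = 0)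
    (hψψ : ∀ i i' : Fin 2, ∀ j j' : ℕ, ∀ k k' : ℤ,
      ∫ x : ℝ, ((2 : ℝ) ^ ((j : ℝ) / 2) * ψ i ((2 : ℝ) ^ j * x - k)) *
          ((2 : ℝ) ^ ((j' : ℝ) / 2) * ψ i' ((2 : ℝ) ^ j' * x - k')) =
        if i = i' ∧ j = j' ∧ k = k' then 1 else 0) :
    ∀ i i' : Fin 6, ∀ j j' : ℕ, ∀ k k' : ℤ × ℤ, ∀ c c' : Fin 2,
      ∫ p : ℝ × ℝ, PsiV2 φ ψ i j k p c * PsiV2 φ ψ i' j' k' p c' =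
        if i = i' ∧ j = j' ∧ k = k' ∧ c = c'
          then ((2 : ℝ) ^ (2 * j))⁻¹ else 0 := by
  intro i i' j j' k k' c c'
  fin_cases i <;> fin_cases i' <;> fin_cases c <;> fin_cases c' <;>
    (simp only [PsiV2, Matrix.cons_val_zero, Matrix.cons_val_one, Matrix.head_cons,
       Matrix.cons_val_two, Matrix.cons_val_three, Matrix.cons_val_four, cons_val_five',
       Matrix.tail_cons, Fin.isValue, Fin.zero_eta, Fin.mk_one, finmk2', finmk3', finmk4',
       finmk5']
     rw [splitT]
     rcases eq_or_ne j j' with rfl | hj <;>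
       [(simp [Iφφj φ hφφ, Iφψ φ ψ hφψ le_rfl, Iψφ φ ψ hφψ le_rfl, Iψψ ψ hψψ, Prod.ext_iff,
           two_mul, pow_add, mul_inv, and_assoc]
         try (split_ifs <;> simp_all)
         try tauto);
        (rcases le_total j j' with h | h <;>
           [simp [Iφψ φ ψ hφψ h, Iψψ ψ hψψ, hj];
            simp [Iψφ φ ψ hφψ h, Iψψ ψ hψψ, hj]])])

/-- If `{φ_i(·−k)} ∪ {2^{j/2}ψ_i(2^j·−k)}` (`i ∈ {1,2}`) is orthonormal in `L²(ℝ)`,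
then the system `{Φ¹_k, Φ²_k} ∪ {Ψ¹_{j,k}, …, Ψ⁶_{j,k}}` is `*`-orthogonal:
`⟨Φ^i_k, Φ^{i'}_{k'}⟩_* = δ_{i,i'} δ_{k,k'} I₂`, `⟨Φ^i_k, Ψ^{i'}_{j,k'}⟩_* = 0₂ₓ₂`, and
`⟨Ψ^i_{j,k}, Ψ^{i'}_{j',k'}⟩_* = δ_{i,i'} δ_{j,j'} δ_{k,k'} 2^{−2j} I₂`. -/
theorem vector_tensor_system_star_orthogonal (φ ψ : Fin 2 → ℝ → ℝ)
    (hφ : ∀ i, MemLp (φ i) 2 (volume : Measure ℝ))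
    (hψ : ∀ i, MemLp (ψ i) 2 (volume : Measure ℝ))
    (hφφ : ∀ i i' : Fin 2, ∀ k k' : ℤ,
      ∫ x : ℝ, φ i (x - k) * φ i' (x - k') = if i = i' ∧ k = k' then 1 else 0)
    (hφψ : ∀ i i' : Fin 2, ∀ k : ℤ, ∀ j : ℕ, ∀ k' : ℤ,
      ∫ x : ℝ, φ i (x - k) *
        ((2 : ℝ) ^ ((j : ℝ) / 2) * ψ i' ((2 : ℝ) ^ j * x - k')) = 0)
    (hψψ : ∀ i i' : Fin 2, ∀ j j' : ℕ, ∀ k k' : ℤ,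
      ∫ x : ℝ, ((2 : ℝ) ^ ((j : ℝ) / 2) * ψ i ((2 : ℝ) ^ j * x - k)) *
          ((2 : ℝ) ^ ((j' : ℝ) / 2) * ψ i' ((2 : ℝ) ^ j' * x - k')) =
        if i = i' ∧ j = j' ∧ k = k' then 1 else 0) :
    (∀ i i' : Fin 2, ∀ k k' : ℤ × ℤ, ∀ c c' : Fin 2,
      ∫ p : ℝ × ℝ, PhiV2 φ i k p c * PhiV2 φ i' k' p c' =
        if i = i' ∧ k = k' ∧ c = c' then 1 else 0) ∧
    (∀ i : Fin 2, ∀ i' : Fin 6, ∀ j : ℕ, ∀ k k' : ℤ × ℤ, ∀ c c' : Fin 2,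
      ∫ p : ℝ × ℝ, PhiV2 φ i k p c * PsiV2 φ ψ i' j k' p c' = 0) ∧
    (∀ i i' : Fin 6, ∀ j j' : ℕ, ∀ k k' : ℤ × ℤ, ∀ c c' : Fin 2,
      ∫ p : ℝ × ℝ, PsiV2 φ ψ i j k p c * PsiV2 φ ψ i' j' k' p c' =
        if i = i' ∧ j = j' ∧ k = k' ∧ c = c'
          then ((2 : ℝ) ^ (2 * j))⁻¹ else 0) :=
  ⟨part1V2 φ hφφ, part2V2 φ ψ hφψ, part3V2 φ ψ hφφ hφψ hψψ⟩
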